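/- Let A, B, Z be Hermitian positive semi-definite matrices in C^{n×n} and α, β > 0. Then ‖(A+αZ):(B+βZ) − A:B‖ ≤ (1/(α+β)) [ ‖(A+B)^† (βA − αB)‖² + αβ ] · ‖Z‖. -/

import Mathlib

open scoped Matrix Matrix.Norms.L2Operator ComplexOrder

/-- `MPInv A B` means `B` is the Moore-Penrose inverse of `A`. -/
def MPInv {n : ℕ} (A B : Matrix (Fin n) (Fin n) ℂ) : Prop :=
  A * B * A = A ∧ B * A * B = B ∧ (A * B).IsHermitian ∧ (B * A).IsHermitian

open scoped MatrixOrder in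
noncomputable def Matrix.PosSemidef.sqrt {n : ℕ} {A : Matrix (Fin n) (Fin n) ℂ} (_ : A.PosSemidef) :
    Matrix (Fin n) (Fin n) ℂ :=
  CFC.sqrt A

open scoped MatrixOrder in
lemma Matrix.PosSemidef.sqrt_mul_self {n : ℕ} {A : Matrix (Fin n) (Fin n) ℂ} (hA : A.PosSemidef) :
    hA.sqrt * hA.sqrt = A :=
  CFC.sqrt_mul_sqrt_self A (Matrix.nonneg_iff_posSemidef.mpr hA)

open scoped MatrixOrder in
lemma Matrix.PosSemidef.posSemidef_sqrt {n : ℕ} {A : Matrix (Fin n) (Fin n) ℂ} (hA : A.PosSemidef) :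
    hA.sqrt.PosSemidef :=
  Matrix.nonneg_iff_posSemidef.mp (CFC.sqrt_nonneg A)

namespace ParallelSumAux

open Matrix

variable {n : ℕ}

abbrev Mat (n : ℕ) := Matrix (Fin n) (Fin n) ℂ

lemma mp_unique {A B C : Mat n} (hB : MPInv A B) (hC : MPInv A C) : B = C := by
  obtain ⟨hB1, hB2, hB3, hB4⟩ := hB
  obtain ⟨hC1, hC2, hC3, hC4⟩ := hC
  have hAconj : Aᴴ * (Cᴴ * Aᴴ) = Aᴴ := by
    have := congrArg conjTranspose hC1
    simpa only [conjTranspose_mul, mul_assoc] using this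
  have hAconj' : Cᴴ * Aᴴ * Bᴴ = Cᴴ * (Aᴴ * Bᴴ) := by simp only [mul_assoc]
  have hAconj2 : (Aᴴ * Cᴴ) * Aᴴ = Aᴴ := by
    simpa only [mul_assoc] using hAconj
  have e1 : A * B = A * C := by
    calc A * B = Bᴴ * Aᴴ := by rw [← hB3.eq, conjTranspose_mul]
    _ = Bᴴ * (Aᴴ * (Cᴴ * Aᴴ)) := by rw [hAconj]
    _ = (Bᴴ * Aᴴ) * (Cᴴ * Aᴴ) := by simp only [mul_assoc]
    _ = (A * B) * (A * C) := by rw [← conjTranspose_mul, ← conjTranspose_mul, hB3.eq, hC3.eq]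
    _ = (A * B * A) * C := by simp only [mul_assoc]
    _ = A * C := by rw [hB1]
  have e2 : B * A = C * A := by
    calc B * A = Aᴴ * Bᴴ := by rw [← hB4.eq, conjTranspose_mul]
    _ = ((Aᴴ * Cᴴ) * Aᴴ) * Bᴴ := by rw [hAconj2]
    _ = (Aᴴ * Cᴴ) * (Aᴴ * Bᴴ) := by simp only [mul_assoc]
    _ = (C * A) * (B * A) := by rw [← conjTranspose_mul, ← conjTranspose_mul, hB4.eq, hC4.eq]
    _ = C * (A * B * A) := by simp only [mul_assoc]
    _ = C * A := by rw [hB1]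
  calc B = B * A * B := hB2.symm
  _ = (C * A) * B := by rw [e2]
  _ = C * (A * B) := by rw [mul_assoc]
  _ = C * (A * C) := by rw [e1]
  _ = C * A * C := by rw [mul_assoc]
  _ = C := hC2

lemma mp_herm {A N : Mat n} (hA : A.IsHermitian) (h : MPInv A N) : N.IsHermitian := by
  obtain ⟨h1, h2, h3, h4⟩ := h
  have key1 : A * Nᴴ = N * A := by
    calc A * Nᴴ = Aᴴᴴ * Nᴴ := by rw [conjTranspose_conjTranspose]
    _ = (N * Aᴴ)ᴴ := by rw [conjTranspose_mul]
    _ = (N * A)ᴴ := by rw [hA.eq]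
    _ = N * A := h4.eq
  have key2 : Nᴴ * A = A * N := by
    calc Nᴴ * A = Nᴴ * Aᴴᴴ := by rw [conjTranspose_conjTranspose]
    _ = (Aᴴ * N)ᴴ := by rw [conjTranspose_mul]
    _ = (A * N)ᴴ := by rw [hA.eq]
    _ = A * N := h3.eq
  have c1 : A * (Nᴴ * A) = A := by
    have := congrArg conjTranspose h1
    simpa only [conjTranspose_mul, mul_assoc, hA.eq] using this
  have c2 : N * (A * N) = N := by simpa only [mul_assoc] using h2
  have h' : MPInv A Nᴴ := by
    refine ⟨by simpa only [mul_assoc] using c1, ?_, ?_, ?_⟩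
    · have := congrArg conjTranspose c2
      simp only [conjTranspose_mul, mul_assoc, hA.eq] at this
      simpa only [mul_assoc] using this
    · show (A * Nᴴ)ᴴ = A * Nᴴ
      rw [key1]; exact h4.eq
    · show (Nᴴ * A)ᴴ = Nᴴ * A
      rw [key2]; exact h3.eq
  exact mp_unique h' ⟨h1, h2, h3, h4⟩

/-- A matrix that is both PSD and negative-PSD is zero. -/
lemma psd_neg_psd_eq_zero {X : Mat n} (h1 : X.PosSemidef) (h2 : (-X).PosSemidef) : X = 0 := by
  have hv : ∀ v : Fin n → ℂ, X *ᵥ v = 0 := by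
    intro v
    have a1 := h1.dotProduct_mulVec_nonneg v
    have a2 := h2.dotProduct_mulVec_nonneg v
    rw [neg_mulVec, dotProduct_neg] at a2
    have : star v ⬝ᵥ X *ᵥ v = 0 := le_antisymm (neg_nonneg.mp a2) a1
    exact (h1.dotProduct_mulVec_zero_iff v).mp this
  ext i j
  have := congrFun (hv (Pi.single j 1)) i
  simpa [mulVec_single] using this

/-- smul of PSD by nonneg real. -/
lemma psd_smul {c : ℝ} (hc : 0 ≤ c) {M : Mat n} (hM : M.PosSemidef) :
    ((c : ℂ) • M).PosSemidef := by
  refine Matrix.PosSemidef.of_dotProduct_mulVec_nonneg ?_ ?_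
  · show ((c : ℂ) • M)ᴴ = (c : ℂ) • M
    rw [conjTranspose_smul, hM.1.eq]
    norm_num
  · intro x
    rw [smul_mulVec, dotProduct_smul, smul_eq_mul]
    exact mul_nonneg (by exact_mod_cast hc) (hM.dotProduct_mulVec_nonneg x)

/-- difference of PSD products absorb. -/
lemma absorb {W Sd M : Mat n} (hW : W.PosSemidef) (hM : M.PosSemidef)
    (hWM : (W - M).PosSemidef) (hSd : MPInv W Sd) : M * (W * Sd) = M := by
  classical
  set P : Matrix (Fin n) (Fin n) ℂ := W * Sd with hP
  have hPH : Pᴴ = P := hSd.2.2.1.eq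
  have hPW : P * W = W := hSd.1
  have h1P : (1 - P) * W = 0 := by rw [sub_mul, one_mul, hPW, sub_self]
  have h1PH : (1 - P)ᴴ = 1 - P := by rw [conjTranspose_sub, conjTranspose_one, hPH]
  -- X := (1-P)ᴴ M (1-P) is PSD and -X is PSD
  have hXpsd : ((1 - P)ᴴ * M * (1 - P)).PosSemidef := hM.conjTranspose_mul_mul_same (1 - P)
  have hXneg : (-((1 - P)ᴴ * M * (1 - P))).PosSemidef := by
    have h2 : ((1 - P)ᴴ * (W - M) * (1 - P)).PosSemidef := hWM.conjTranspose_mul_mul_same (1 - P)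
    have h3 : (1 - P)ᴴ * (W - M) * (1 - P) = -((1 - P)ᴴ * M * (1 - P)) := by
      rw [h1PH, mul_sub (1 - P) W M, h1P]
      simp [sub_mul]
    rwa [h3] at h2
  have hX0 : (1 - P)ᴴ * M * (1 - P) = 0 := psd_neg_psd_eq_zero hXpsd hXneg
  -- now conclude M * (1 - P) = 0
  have hs := hM.sqrt_mul_self
  have hsH : hM.sqrtᴴ = hM.sqrt := hM.posSemidef_sqrt.1.eq
  have hN : (hM.sqrt * (1 - P))ᴴ * (hM.sqrt * (1 - P)) = 0 := by
    rw [conjTranspose_mul, hsH, h1PH]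
    calc (1 - P) * hM.sqrt * (hM.sqrt * (1 - P))
        = (1 - P) * (hM.sqrt * hM.sqrt) * (1 - P) := by simp only [mul_assoc]
    _ = (1 - P)ᴴ * M * (1 - P) := by rw [hs, h1PH]
    _ = 0 := hX0
  have hN0 : hM.sqrt * (1 - P) = 0 := conjTranspose_mul_self_eq_zero.mp hN
  have : M * (1 - P) = 0 := by
    calc M * (1 - P) = hM.sqrt * (hM.sqrt * (1 - P)) := by rw [← mul_assoc, hs]
    _ = 0 := by rw [hN0, mul_zero]
  have := sub_eq_zero.mp (by simpa [mul_sub] using this)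
  simpa using this.symm

noncomputable def v2e (v : Fin n → ℂ) : EuclideanSpace ℂ (Fin n) := (WithLp.equiv 2 _).symm v

lemma inner_v2e (v w : Fin n → ℂ) : (inner ℂ (v2e v) (v2e w) : ℂ) = star v ⬝ᵥ w :=
  (EuclideanSpace.inner_toLp_toLp v w).trans (dotProduct_comm _ _)

lemma norm_v2e_sq (v : Fin n → ℂ) : star v ⬝ᵥ v = ((‖v2e v‖ : ℝ) : ℂ) ^ 2 := by
  rw [← inner_v2e]
  exact inner_self_eq_norm_sq_to_K _

lemma norm_v2e_sq' (v : Fin n → ℂ) : RCLike.re (star v ⬝ᵥ v) = ‖v2e v‖ ^ 2 := by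
  rw [← inner_v2e]
  exact inner_self_eq_norm_sq _

lemma mulVec_norm_le (M : Mat n) (v : Fin n → ℂ) : ‖v2e (M *ᵥ v)‖ ≤ ‖M‖ * ‖v2e v‖ :=
  M.l2_opNorm_mulVec (v2e v)

lemma dot_self_eq (B : Mat n) (v : Fin n → ℂ) :
    star (B *ᵥ v) ⬝ᵥ (B *ᵥ v) = star v ⬝ᵥ (Bᴴ * B) *ᵥ v := by
  simp only [star_mulVec, dotProduct_mulVec, vecMul_vecMul]

lemma quad_conj (K B : Mat n) (v : Fin n → ℂ) :
    star v ⬝ᵥ (Bᴴ * K * B) *ᵥ v = star (B *ᵥ v) ⬝ᵥ K *ᵥ (B *ᵥ v) := by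
  simp only [star_mulVec, dotProduct_mulVec, vecMul_vecMul]

lemma re_quad_le (K : Mat n) (v : Fin n → ℂ) :
    RCLike.re (star v ⬝ᵥ K *ᵥ v) ≤ ‖K‖ * ‖v2e v‖ ^ 2 := by
  have h1 : star v ⬝ᵥ K *ᵥ v = (inner ℂ (v2e v) (v2e (K *ᵥ v)) : ℂ) := (inner_v2e _ _).symm
  rw [h1]
  calc RCLike.re (inner ℂ (v2e v) (v2e (K *ᵥ v)) : ℂ)
      ≤ ‖(inner ℂ (v2e v) (v2e (K *ᵥ v)) : ℂ)‖ := RCLike.re_le_norm _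
    _ ≤ ‖v2e v‖ * ‖v2e (K *ᵥ v)‖ := norm_inner_le_norm _ _
    _ ≤ ‖v2e v‖ * (‖K‖ * ‖v2e v‖) := by
        exact mul_le_mul_of_nonneg_left (mulVec_norm_le K v) (norm_nonneg _)
    _ = ‖K‖ * ‖v2e v‖ ^ 2 := by ring

lemma le_of_sq_le_sq {a b : ℝ} (hb : 0 ≤ b) (h : a ^ 2 ≤ b ^ 2) : a ≤ b := by
  nlinarith [sq_nonneg (a - b), sq_nonneg (a + b)]

lemma norm_le_of_psd {M N : Mat n} (hM : M.PosSemidef) (hN : N.PosSemidef)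
    (hMN : (N - M).PosSemidef) : ‖M‖ ≤ ‖N‖ := by
  classical
  have hMnn : (0:ℝ) ≤ ‖M‖ := norm_nonneg _
  have hNnn : (0:ℝ) ≤ ‖N‖ := norm_nonneg _
  set s := hM.sqrt with hsdef
  have hss : s * s = M := hM.sqrt_mul_self
  have hsH : sᴴ = s := hM.posSemidef_sqrt.1.eq
  have hMM : Mᴴ * M = sᴴ * M * s := by
    rw [hM.1.eq, hsH, ← hss]
    simp only [mul_assoc]
  have key : ∀ v : Fin n → ℂ, ‖v2e (M *ᵥ v)‖ ^ 2 ≤ (‖N‖ * ‖M‖) * ‖v2e v‖ ^ 2 := by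
    intro v
    have e1 : ‖v2e (M *ᵥ v)‖ ^ 2 = RCLike.re (star (s *ᵥ v) ⬝ᵥ M *ᵥ (s *ᵥ v)) := by
      rw [← norm_v2e_sq', dot_self_eq, hMM, quad_conj]
    have e2 : RCLike.re (star (s *ᵥ v) ⬝ᵥ M *ᵥ (s *ᵥ v))
        ≤ RCLike.re (star (s *ᵥ v) ⬝ᵥ N *ᵥ (s *ᵥ v)) := by
      have h0 := hMN.re_dotProduct_nonneg (s *ᵥ v)
      rw [sub_mulVec, dotProduct_sub, map_sub] at h0
      linarith
    have e3 : RCLike.re (star (s *ᵥ v) ⬝ᵥ N *ᵥ (s *ᵥ v)) ≤ ‖N‖ * ‖v2e (s *ᵥ v)‖ ^ 2 :=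
      re_quad_le N (s *ᵥ v)
    have e4 : ‖v2e (s *ᵥ v)‖ ^ 2 ≤ ‖M‖ * ‖v2e v‖ ^ 2 := by
      have : ‖v2e (s *ᵥ v)‖ ^ 2 = RCLike.re (star v ⬝ᵥ M *ᵥ v) := by
        rw [← norm_v2e_sq', dot_self_eq, hsH, hss]
      rw [this]
      exact re_quad_le M v
    calc ‖v2e (M *ᵥ v)‖ ^ 2 = RCLike.re (star (s *ᵥ v) ⬝ᵥ M *ᵥ (s *ᵥ v)) := e1
      _ ≤ RCLike.re (star (s *ᵥ v) ⬝ᵥ N *ᵥ (s *ᵥ v)) := e2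
      _ ≤ ‖N‖ * ‖v2e (s *ᵥ v)‖ ^ 2 := e3
      _ ≤ ‖N‖ * (‖M‖ * ‖v2e v‖ ^ 2) := mul_le_mul_of_nonneg_left e4 hNnn
      _ = (‖N‖ * ‖M‖) * ‖v2e v‖ ^ 2 := by ring
  have hsqrt : ‖M‖ ≤ Real.sqrt (‖N‖ * ‖M‖) := by
    rw [Matrix.l2_opNorm_def]
    apply ContinuousLinearMap.opNorm_le_bound _ (Real.sqrt_nonneg _)
    intro x
    have hk := key (WithLp.equiv 2 _ x)
    have hdefeq : ((Matrix.toEuclideanLin.trans LinearMap.toContinuousLinearMap) M) x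
        = v2e (M *ᵥ (WithLp.equiv 2 _ x)) := rfl
    have hx : ‖x‖ = ‖v2e (WithLp.equiv 2 _ x)‖ := rfl
    rw [hdefeq, hx]
    apply le_of_sq_le_sq (mul_nonneg (Real.sqrt_nonneg _) (norm_nonneg _))
    calc ‖v2e (M *ᵥ (WithLp.equiv 2 _ x))‖ ^ 2
        ≤ (‖N‖ * ‖M‖) * ‖v2e (WithLp.equiv 2 _ x)‖ ^ 2 := hk
      _ = (Real.sqrt (‖N‖ * ‖M‖) * ‖v2e (WithLp.equiv 2 _ x)‖) ^ 2 := by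
          rw [mul_pow, Real.sq_sqrt (mul_nonneg hNnn hMnn)]
  rcases eq_or_lt_of_le hMnn with h0 | h0
  · linarith
  · have h2 : ‖M‖ ^ 2 ≤ ‖N‖ * ‖M‖ := by
      have := pow_le_pow_left₀ hMnn hsqrt 2
      rwa [Real.sq_sqrt (mul_nonneg hNnn hMnn)] at this
    nlinarith

lemma contraction_flip {G : Mat n} (h : (1 - G * Gᴴ).PosSemidef) :
    (1 - Gᴴ * G).PosSemidef := by
  have hcontr : ∀ v : Fin n → ℂ, ‖v2e (Gᴴ *ᵥ v)‖ ≤ ‖v2e v‖ := by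
    intro v
    have h0 := h.re_dotProduct_nonneg v
    have e1 : star v ⬝ᵥ (G * Gᴴ) *ᵥ v = star (Gᴴ *ᵥ v) ⬝ᵥ (Gᴴ *ᵥ v) := by
      rw [dot_self_eq, conjTranspose_conjTranspose]
    rw [sub_mulVec, dotProduct_sub, map_sub, one_mulVec, e1, norm_v2e_sq', norm_v2e_sq'] at h0
    exact le_of_sq_le_sq (norm_nonneg _) (by linarith)
  have hGx : ∀ x : Fin n → ℂ, ‖v2e (G *ᵥ x)‖ ≤ ‖v2e x‖ := by
    intro x
    set u := G *ᵥ x with hu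
    have e1 : ((‖v2e u‖ : ℝ) : ℂ) ^ 2 = (inner ℂ (v2e x) (v2e (Gᴴ *ᵥ u)) : ℂ) := by
      rw [inner_v2e, ← norm_v2e_sq, hu, dot_self_eq, ← mulVec_mulVec]
    have e2 : ‖v2e u‖ ^ 2 ≤ ‖v2e x‖ * ‖v2e u‖ := by
      have h3 : ‖(((‖v2e u‖ : ℝ) : ℂ) ^ 2)‖ = ‖v2e u‖ ^ 2 := by
        rw [norm_pow, Complex.norm_real, Real.norm_eq_abs, abs_of_nonneg (norm_nonneg _)]
      calc ‖v2e u‖ ^ 2 = ‖(((‖v2e u‖ : ℝ) : ℂ) ^ 2)‖ := h3.symm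
        _ = ‖(inner ℂ (v2e x) (v2e (Gᴴ *ᵥ u)) : ℂ)‖ := by rw [e1]
        _ ≤ ‖v2e x‖ * ‖v2e (Gᴴ *ᵥ u)‖ := norm_inner_le_norm _ _
        _ ≤ ‖v2e x‖ * ‖v2e u‖ := mul_le_mul_of_nonneg_left (hcontr u) (norm_nonneg _)
    rcases eq_or_lt_of_le (norm_nonneg (v2e u)) with h4 | h4
    · rw [← h4]; exact norm_nonneg _
    · nlinarith
  refine Matrix.PosSemidef.of_dotProduct_mulVec_nonneg ?_ ?_
  · show (1 - Gᴴ * G)ᴴ = 1 - Gᴴ * G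
    simp [conjTranspose_sub, conjTranspose_mul]
  · intro x
    have e1 : star x ⬝ᵥ (1 - Gᴴ * G) *ᵥ x
        = ((((‖v2e x‖ ^ 2 - ‖v2e (G *ᵥ x)‖ ^ 2 : ℝ)) : ℂ)) := by
      rw [sub_mulVec, dotProduct_sub, one_mulVec, ← dot_self_eq, norm_v2e_sq, norm_v2e_sq]
      push_cast
      ring
    rw [e1, Complex.zero_le_real]
    have := hGx x
    nlinarith [norm_nonneg (v2e (G *ᵥ x)), norm_nonneg (v2e x)]

/-- generic expansion of the product through a pseudoinverse. -/
lemma keyexp {W Sd D : Mat n} (u v w : ℂ)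
    (f1 : W * Sd * W = W) (f2 : D * Sd * W = D) (f3 : W * Sd * D = D) :
    (u • W + w • D) * Sd * (v • W - w • D)
      = (u * v) • W + (v * w) • D - (u * w) • D - (w * w) • (D * Sd * D) := by
  simp only [add_mul, sub_mul, mul_add, mul_sub, smul_mul_assoc, mul_smul_comm, smul_smul,
    f1, f2, f3]
  module

end ParallelSumAux

open Matrix in
set_option maxHeartbeats 2000000 in
/-- Norm bound for the two-sided perturbation along a common direction Z. -/
theorem two_sided_perturbation_norm_le {n : ℕ}
    (A B Z Sd ABd : Matrix (Fin n) (Fin n) ℂ) (α β : ℝ)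
    (hA : A.PosSemidef) (hB : B.PosSemidef) (hZ : Z.PosSemidef)
    (hα : 0 < α) (hβ : 0 < β)
    (hSd : MPInv (A + (α : ℂ) • Z + (B + (β : ℂ) • Z)) Sd)
    (hABd : MPInv (A + B) ABd) :
    ‖(A + (α : ℂ) • Z) * Sd * (B + (β : ℂ) • Z) - A * ABd * B‖
      ≤ (1 / (α + β)) * (‖ABd * ((β : ℂ) • A - (α : ℂ) • B)‖ ^ 2 + α * β) * ‖Z‖ := by
  classical
  have hg0 : (0:ℝ) < α + β := by positivity
  set D : Matrix (Fin n) (Fin n) ℂ := (β : ℂ) • A - (α : ℂ) • B with hDdef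
  set W : Matrix (Fin n) (Fin n) ℂ := A + (α : ℂ) • Z + (B + (β : ℂ) • Z) with hWdef
  set S : Matrix (Fin n) (Fin n) ℂ := A + B with hSdef
  set C : Matrix (Fin n) (Fin n) ℂ := ABd * D with hCdef
  have hgc : ((α:ℂ) + (β:ℂ)) = (((α + β : ℝ)) : ℂ) := by push_cast; ring
  have hgne : (α:ℂ) + (β:ℂ) ≠ 0 := by
    rw [hgc]
    exact_mod_cast ne_of_gt hg0
  -- PSD basics
  have hZa : ((α:ℂ) • Z).PosSemidef := ParallelSumAux.psd_smul hα.le hZ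
  have hZb : ((β:ℂ) • Z).PosSemidef := ParallelSumAux.psd_smul hβ.le hZ
  have hW : W.PosSemidef := (hA.add hZa).add (hB.add hZb)
  have hS : S.PosSemidef := hA.add hB
  have hWH : W.IsHermitian := hW.1
  have hSH : S.IsHermitian := hS.1
  have hSdH : Sd.IsHermitian := ParallelSumAux.mp_herm hWH hSd
  have hABdH : ABd.IsHermitian := ParallelSumAux.mp_herm hSH hABd
  have hDH : Dᴴ = D := by
    rw [hDdef]
    simp [conjTranspose_sub, conjTranspose_smul, hA.1.eq, hB.1.eq, Complex.conj_ofReal]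
  -- commutation of projections
  have hPcomm : W * Sd = Sd * W := by
    conv_lhs => rw [← hSd.2.2.1.eq]
    rw [conjTranspose_mul, hSdH.eq, hWH.eq]
  have hQcomm : S * ABd = ABd * S := by
    conv_lhs => rw [← hABd.2.2.1.eq]
    rw [conjTranspose_mul, hABdH.eq, hSH.eq]
  -- absorption facts
  have hWA : (W - A).PosSemidef := by
    have e : W - A = (α:ℂ) • Z + (B + (β:ℂ) • Z) := by rw [hWdef]; abel
    rw [e]; exact hZa.add (hB.add hZb)
  have hWB : (W - B).PosSemidef := by
    have e : W - B = A + (α:ℂ) • Z + (β:ℂ) • Z := by rw [hWdef]; abel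
    rw [e]; exact (hA.add hZa).add hZb
  have hWS : (W - S).PosSemidef := by
    have e : W - S = (α:ℂ) • Z + (β:ℂ) • Z := by rw [hWdef, hSdef]; abel
    rw [e]; exact hZa.add hZb
  have hSA : (S - A).PosSemidef := by
    have e : S - A = B := by rw [hSdef]; abel
    rw [e]; exact hB
  have hSB : (S - B).PosSemidef := by
    have e : S - B = A := by rw [hSdef]; abel
    rw [e]; exact hA
  have aW : A * (W * Sd) = A := ParallelSumAux.absorb hW hA hWA hSd
  have bW : B * (W * Sd) = B := ParallelSumAux.absorb hW hB hWB hSd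
  have sW : S * (W * Sd) = S := ParallelSumAux.absorb hW hS hWS hSd
  have aS : A * (S * ABd) = A := ParallelSumAux.absorb hS hA hSA hABd
  have bS : B * (S * ABd) = B := ParallelSumAux.absorb hS hB hSB hABd
  have leftify : ∀ {M : Matrix (Fin n) (Fin n) ℂ}, M.IsHermitian → M * (W * Sd) = M → (W * Sd) * M = M := by
    intro M hMH h
    have h2 := congrArg conjTranspose h
    simp only [conjTranspose_mul] at h2
    rw [hSdH.eq, hWH.eq, hMH.eq] at h2
    calc (W * Sd) * M = (Sd * W) * M := by rw [hPcomm]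
    _ = Sd * W * M := rfl
    _ = M := by rw [mul_assoc]; rw [mul_assoc] at h2; exact h2
  have leftifyS : ∀ {M : Matrix (Fin n) (Fin n) ℂ}, M.IsHermitian → M * (S * ABd) = M → (S * ABd) * M = M := by
    intro M hMH h
    have h2 := congrArg conjTranspose h
    simp only [conjTranspose_mul] at h2
    rw [hABdH.eq, hSH.eq, hMH.eq] at h2
    calc (S * ABd) * M = (ABd * S) * M := by rw [hQcomm]
    _ = M := by rw [mul_assoc]; rw [mul_assoc] at h2; exact h2
  have aW' : (W * Sd) * A = A := leftify hA.1 aW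
  have bW' : (W * Sd) * B = B := leftify hB.1 bW
  have sW' : (W * Sd) * S = S := leftify hS.1 sW
  have aS' : (S * ABd) * A = A := leftifyS hA.1 aS
  have bS' : (S * ABd) * B = B := leftifyS hB.1 bS
  -- D absorptions
  have dW : D * (W * Sd) = D := by
    rw [hDdef, sub_mul, smul_mul_assoc, smul_mul_assoc, aW, bW]
  have dW' : (W * Sd) * D = D := by
    rw [hDdef, mul_sub, mul_smul_comm, mul_smul_comm, aW', bW']
  have dS : D * (S * ABd) = D := by
    rw [hDdef, sub_mul, smul_mul_assoc, smul_mul_assoc, aS, bS]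
  have dS' : (S * ABd) * D = D := by
    rw [hDdef, mul_sub, mul_smul_comm, mul_smul_comm, aS', bS']
  -- f-facts
  have f1 : W * Sd * W = W := hSd.1
  have f2 : D * Sd * W = D := by rw [mul_assoc, ← hPcomm]; exact dW
  have f3 : W * Sd * D = D := dW'
  have f1' : S * ABd * S = S := hABd.1
  have f2' : D * ABd * S = D := by rw [mul_assoc, ← hQcomm]; exact dS
  have f3' : S * ABd * D = D := dS'
  -- linear decompositions
  have hX : A + (α:ℂ) • Z = (((α:ℂ))/((α:ℂ)+(β:ℂ))) • W + (1/((α:ℂ)+(β:ℂ))) • D := by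
    rw [hWdef, hDdef]
    match_scalars <;> field_simp <;> ring
  have hY : B + (β:ℂ) • Z = (((β:ℂ))/((α:ℂ)+(β:ℂ))) • W - (1/((α:ℂ)+(β:ℂ))) • D := by
    rw [hWdef, hDdef]
    match_scalars <;> field_simp <;> ring
  have hA2 : A = (((α:ℂ))/((α:ℂ)+(β:ℂ))) • S + (1/((α:ℂ)+(β:ℂ))) • D := by
    rw [hSdef, hDdef]
    match_scalars <;> field_simp <;> ring
  have hB2 : B = (((β:ℂ))/((α:ℂ)+(β:ℂ))) • S - (1/((α:ℂ)+(β:ℂ))) • D := by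
    rw [hSdef, hDdef]
    match_scalars <;> field_simp <;> ring
  set u : ℂ := ((α:ℂ))/((α:ℂ)+(β:ℂ)) with hu
  set v : ℂ := ((β:ℂ))/((α:ℂ)+(β:ℂ)) with hv
  set w : ℂ := 1/((α:ℂ)+(β:ℂ)) with hw
  have E1 : (A + (α:ℂ) • Z) * Sd * (B + (β:ℂ) • Z)
      = (u * v) • W + (v * w) • D - (u * w) • D - (w * w) • (D * Sd * D) := by
    rw [hX, hY]; exact ParallelSumAux.keyexp u v w f1 f2 f3
  have E2 : A * ABd * B
      = (u * v) • S + (v * w) • D - (u * w) • D - (w * w) • (D * ABd * D) := by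
    have e : A * ABd * B = (u • S + w • D) * ABd * (v • S - w • D) := by
      rw [← hA2, ← hB2]
    rw [e]; exact ParallelSumAux.keyexp u v w f1' f2' f3'
  -- step 2
  set R : Matrix (Fin n) (Fin n) ℂ := D * Sd * Z * (ABd * D) with hRdef
  have hWSeq : W - S = ((α:ℂ)+(β:ℂ)) • Z := by
    rw [hWdef, hSdef]; module
  have step2 : ((α:ℂ)+(β:ℂ)) • R = D * ABd * D - D * Sd * D := by
    calc ((α:ℂ)+(β:ℂ)) • R = (D * Sd) * (((α:ℂ)+(β:ℂ)) • Z) * (ABd * D) := by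
          rw [hRdef]; simp only [smul_mul_assoc, mul_smul_comm]
    _ = (D * Sd) * (W - S) * (ABd * D) := by rw [hWSeq]
    _ = (D * Sd * W) * (ABd * D) - ((D * Sd) * S) * (ABd * D) := by
          rw [mul_sub, sub_mul]
    _ = D * (ABd * D) - (D * Sd) * (S * (ABd * D)) := by rw [f2, mul_assoc]
    _ = D * ABd * D - (D * Sd) * D := by
          rw [← mul_assoc S ABd D, f3', ← mul_assoc]
    _ = D * ABd * D - D * Sd * D := rfl
  -- key identity
  have hWeq : W = S + ((α:ℂ)+(β:ℂ)) • Z := by rw [hWdef, hSdef]; module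
  have hDSdD : D * Sd * D = D * ABd * D - ((α:ℂ)+(β:ℂ)) • R := by
    rw [step2]; abel
  have KEY : (A + (α:ℂ) • Z) * Sd * (B + (β:ℂ) • Z) - A * ABd * B
      = (((α:ℂ)*(β:ℂ))/((α:ℂ)+(β:ℂ))) • Z + (1/((α:ℂ)+(β:ℂ))) • R := by
    rw [E1, E2, hWeq, hDSdD, hu, hv, hw]
    match_scalars <;> field_simp <;> ring
  -- the PSD chain for the norm bound on R
  have hSdPSD : Sd.PosSemidef := by
    have e : Sd = Sdᴴ * W * Sd := by rw [hSdH.eq]; exact hSd.2.1.symm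
    have h2 := hW.conjTranspose_mul_mul_same Sd
    rwa [← e] at h2
  set q : Matrix (Fin n) (Fin n) ℂ := hSdPSD.sqrt with hqdef
  have hqq : q * q = Sd := hSdPSD.sqrt_mul_self
  have hqH : qᴴ = q := hSdPSD.posSemidef_sqrt.1.eq
  set s : Matrix (Fin n) (Fin n) ℂ := hS.sqrt with hsdef
  have hss : s * s = S := hS.sqrt_mul_self
  have hsH : sᴴ = s := hS.posSemidef_sqrt.1.eq
  set E : Matrix (Fin n) (Fin n) ℂ := q * W * q with hEdef
  have hEE : E * E = E := by
    rw [hEdef]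
    calc (q * W * q) * (q * W * q) = q * (W * ((q * q) * (W * q))) := by
          simp only [mul_assoc]
    _ = q * (W * (Sd * (W * q))) := by rw [hqq]
    _ = q * ((W * Sd * W) * q) := by simp only [mul_assoc]
    _ = q * (W * q) := by rw [f1]
    _ = q * W * q := by rw [mul_assoc]
  have hEH : Eᴴ = E := by
    rw [hEdef, conjTranspose_mul, conjTranspose_mul, hqH, hWH.eq, mul_assoc]
  have h1E : ((1 : Matrix (Fin n) (Fin n) ℂ) - E).PosSemidef := by
    have h1 := posSemidef_conjTranspose_mul_self ((1 : Matrix (Fin n) (Fin n) ℂ) - E)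
    have h2 : ((1 : Matrix (Fin n) (Fin n) ℂ) - E)ᴴ * ((1 : Matrix (Fin n) (Fin n) ℂ) - E) = 1 - E := by
      rw [conjTranspose_sub, conjTranspose_one, hEH, mul_sub, mul_one, sub_mul, one_mul, hEE]
      abel
    rwa [h2] at h1
  have hET : (E - q * S * q).PosSemidef := by
    have h1 := hWS.conjTranspose_mul_mul_same q
    have h2 : qᴴ * (W - S) * q = E - q * S * q := by
      rw [hqH, mul_sub, sub_mul, hEdef]
    rwa [h2] at h1
  have h1T : ((1 : Matrix (Fin n) (Fin n) ℂ) - q * S * q).PosSemidef := by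
    have h1 := h1E.add hET
    have h2 : ((1 : Matrix (Fin n) (Fin n) ℂ) - E) + (E - q * S * q) = 1 - q * S * q := by abel
    rwa [h2] at h1
  have hflip : ((1 : Matrix (Fin n) (Fin n) ℂ) - (q * s)ᴴ * (q * s)).PosSemidef := by
    apply ParallelSumAux.contraction_flip
    have h2 : (q * s) * (q * s)ᴴ = q * S * q := by
      rw [conjTranspose_mul, hsH, hqH]
      calc (q * s) * (s * q) = q * ((s * s) * q) := by simp only [mul_assoc]
      _ = q * (S * q) := by rw [hss]
      _ = q * S * q := by rw [mul_assoc]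
    rwa [h2]
  have hGpsd : (S - S * Sd * S).PosSemidef := by
    have h1 := hflip.conjTranspose_mul_mul_same s
    have h2 : sᴴ * ((1 : Matrix (Fin n) (Fin n) ℂ) - (q * s)ᴴ * (q * s)) * s = S - S * Sd * S := by
      rw [hsH, conjTranspose_mul, hsH, hqH, mul_sub, sub_mul, mul_one]
      have e2 : s * ((s * q) * (q * s)) * s = S * Sd * S := by
        calc s * ((s * q) * (q * s)) * s = (s * s) * ((q * q) * (s * s)) := by
              simp only [mul_assoc]
        _ = S * (Sd * S) := by rw [hss, hqq]
        _ = S * Sd * S := by rw [mul_assoc]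
      rw [e2, hss]
    rwa [h2] at h1
  have hGZ : ((((α:ℂ)+(β:ℂ)) • Z) - (S - S * Sd * S)).PosSemidef := by
    have t1 : S * Sd * W = S := by rw [mul_assoc, ← hPcomm]; exact sW
    have t2 : W * Sd * S = S := sW'
    have h1 := hW.mul_mul_conjTranspose_same ((1 : Matrix (Fin n) (Fin n) ℂ) - S * Sd)
    have hconj : ((1 : Matrix (Fin n) (Fin n) ℂ) - S * Sd)ᴴ = 1 - Sd * S := by
      rw [conjTranspose_sub, conjTranspose_one, conjTranspose_mul, hSdH.eq, hSH.eq]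
    rw [hconj] at h1
    have h2 : ((1 : Matrix (Fin n) (Fin n) ℂ) - S * Sd) * W * ((1 : Matrix (Fin n) (Fin n) ℂ) - Sd * S)
        = (((α:ℂ)+(β:ℂ)) • Z) - (S - S * Sd * S) := by
      calc ((1 : Matrix (Fin n) (Fin n) ℂ) - S * Sd) * W * ((1 : Matrix (Fin n) (Fin n) ℂ) - Sd * S)
          = (W - S * Sd * W) * ((1 : Matrix (Fin n) (Fin n) ℂ) - Sd * S) := by rw [sub_mul, one_mul]
      _ = (W - S) * ((1 : Matrix (Fin n) (Fin n) ℂ) - Sd * S) := by rw [t1]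
      _ = (W - S) - (W * (Sd * S) - S * (Sd * S)) := by
            rw [mul_sub, mul_one, sub_mul]
      _ = (W - S) - (S - S * Sd * S) := by
            rw [← mul_assoc, ← mul_assoc, t2]
      _ = (((α:ℂ)+(β:ℂ)) • Z) - (S - S * Sd * S) := by rw [hWSeq]
    rwa [h2] at h1
  -- relating R to the PSD sandwich
  have hCH : Cᴴ = D * ABd := by rw [hCdef, conjTranspose_mul, hABdH.eq, hDH]
  have hM1 : Cᴴ * (S - S * Sd * S) * C = ((α:ℂ)+(β:ℂ)) • R := by
    rw [step2, hCH, hCdef]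
    rw [mul_sub, sub_mul]
    have e1 : (D * ABd) * S * (ABd * D) = D * ABd * D := by
      calc (D * ABd) * S * (ABd * D) = (D * ABd * S) * (ABd * D) := rfl
      _ = D * (ABd * D) := by rw [f2']
      _ = D * ABd * D := by rw [mul_assoc]
    have e2 : (D * ABd) * (S * Sd * S) * (ABd * D) = D * Sd * D := by
      calc (D * ABd) * (S * Sd * S) * (ABd * D)
          = (D * ABd * S) * (Sd * (S * ABd * D)) := by simp only [mul_assoc]
      _ = D * (Sd * D) := by rw [f2', f3']
      _ = D * Sd * D := by rw [mul_assoc]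
    rw [e1, e2]
  -- norm bounds
  have hM1psd : (Cᴴ * (S - S * Sd * S) * C).PosSemidef := hGpsd.conjTranspose_mul_mul_same C
  have hM2psd : (Cᴴ * (((α:ℂ)+(β:ℂ)) • Z) * C).PosSemidef := by
    have : ((((α:ℂ)+(β:ℂ))) • Z).PosSemidef := by
      rw [hgc]; exact ParallelSumAux.psd_smul hg0.le hZ
    exact this.conjTranspose_mul_mul_same C
  have hdiffpsd : ((Cᴴ * (((α:ℂ)+(β:ℂ)) • Z) * C) - (Cᴴ * (S - S * Sd * S) * C)).PosSemidef := by
    have h1 := hGZ.conjTranspose_mul_mul_same C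
    have h2 : Cᴴ * ((((α:ℂ)+(β:ℂ)) • Z) - (S - S * Sd * S)) * C
        = (Cᴴ * (((α:ℂ)+(β:ℂ)) • Z) * C) - (Cᴴ * (S - S * Sd * S) * C) := by
      rw [mul_sub, sub_mul]
    rwa [h2] at h1
  have hnormZ : ‖(((α:ℂ)+(β:ℂ))) • Z‖ = (α + β) * ‖Z‖ := by
    rw [hgc, norm_smul]
    congr 1
    rw [Complex.norm_real, Real.norm_eq_abs, abs_of_pos hg0]
  have hnormM2 : ‖Cᴴ * (((α:ℂ)+(β:ℂ)) • Z) * C‖ ≤ ‖C‖ * ((α + β) * ‖Z‖ * ‖C‖) := by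
    calc ‖Cᴴ * (((α:ℂ)+(β:ℂ)) • Z) * C‖
        ≤ ‖Cᴴ * (((α:ℂ)+(β:ℂ)) • Z)‖ * ‖C‖ := Matrix.l2_opNorm_mul _ _
    _ ≤ (‖Cᴴ‖ * ‖(((α:ℂ)+(β:ℂ))) • Z‖) * ‖C‖ :=
        mul_le_mul_of_nonneg_right (Matrix.l2_opNorm_mul _ _) (norm_nonneg _)
    _ = ‖C‖ * ((α + β) * ‖Z‖ * ‖C‖) := by
        rw [Matrix.l2_opNorm_conjTranspose, hnormZ]; ring
  have hnormR : ‖R‖ ≤ ‖C‖ ^ 2 * ‖Z‖ := by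
    have h1 : ‖((α:ℂ)+(β:ℂ)) • R‖ = (α + β) * ‖R‖ := by
      rw [hgc, norm_smul, Complex.norm_real, Real.norm_eq_abs, abs_of_pos hg0]
    have h2 : ‖Cᴴ * (S - S * Sd * S) * C‖ ≤ ‖Cᴴ * (((α:ℂ)+(β:ℂ)) • Z) * C‖ :=
      ParallelSumAux.norm_le_of_psd hM1psd hM2psd hdiffpsd
    rw [hM1, h1] at h2
    have h3 : (α + β) * ‖R‖ ≤ (α + β) * (‖C‖ ^ 2 * ‖Z‖) := by
      calc (α + β) * ‖R‖ ≤ ‖C‖ * ((α + β) * ‖Z‖ * ‖C‖) := le_trans h2 hnormM2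
      _ = (α + β) * (‖C‖ ^ 2 * ‖Z‖) := by ring
    exact le_of_mul_le_mul_left h3 hg0
  -- final computation
  rw [KEY]
  have hab : (((α:ℂ)*(β:ℂ))/((α:ℂ)+(β:ℂ))) = (((α*β/(α+β) : ℝ)) : ℂ) := by
    push_cast; ring
  have hinv : (1/((α:ℂ)+(β:ℂ))) = (((1/(α+β) : ℝ)) : ℂ) := by
    push_cast; ring
  calc ‖(((α:ℂ)*(β:ℂ))/((α:ℂ)+(β:ℂ))) • Z + (1/((α:ℂ)+(β:ℂ))) • R‖
      ≤ ‖(((α:ℂ)*(β:ℂ))/((α:ℂ)+(β:ℂ))) • Z‖ + ‖(1/((α:ℂ)+(β:ℂ))) • R‖ := norm_add_le _ _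
    _ = (α*β/(α+β)) * ‖Z‖ + (1/(α+β)) * ‖R‖ := by
        rw [hab, hinv, norm_smul, norm_smul, Complex.norm_real, Complex.norm_real,
          Real.norm_eq_abs, Real.norm_eq_abs, abs_of_pos (by positivity),
          abs_of_pos (by positivity)]
    _ ≤ (α*β/(α+β)) * ‖Z‖ + (1/(α+β)) * (‖C‖ ^ 2 * ‖Z‖) := by
        have := mul_le_mul_of_nonneg_left hnormR (le_of_lt (by positivity : (0:ℝ) < 1/(α+β)))
        linarith
    _ = (1 / (α + β)) * (‖C‖ ^ 2 + α * β) * ‖Z‖ := by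
        field_simp
        ring
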